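/- arXiv:2511.06487 — 2 statements merged into one kernel-verified Lean document; each statement's English description precedes it below -/
import Mathlib

section
/- Let A_j = ι* (L_j + L_j^*) ι be the compression of the symmetrized creation operators to the span of basis vectors e_w with |w| ≤ D. Then for every word w of length at most D, A^w Ω = e_w + ∑_{|v| < |w|} c_{v,w} e_v for some scalars c_{v,w}. -/
/-- Words of length at most `D` in the free monoid on `g` letters. -/
abbrev Word (g D : ℕ) := {l : List (Fin g) // l.length ≤ D}

noncomputable instance wordFintype (g D : ℕ) : Fintype (Word g D) :=
  haveI : Finite (Word g D) := (List.finite_length_le (Fin g) D).to_subtype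
  Fintype.ofFinite _

/-- The matrix of the compression `A_j = ι^*(L_j + L_j^*)ι` of the symmetrized left
creation operator to the span of the Fock basis vectors `e_w`, `|w| ≤ D`:
its `(v,w)` entry is `⟨A_j e_w, e_v⟩ = δ_{v, x_j w} + δ_{w, x_j v}`. -/
noncomputable def creA (g D : ℕ) (j : Fin g) : Matrix (Word g D) (Word g D) ℂ :=
  fun v w => (if v.1 = j :: w.1 then 1 else 0) + (if w.1 = j :: v.1 then 1 else 0)

/-- `A^w = A_{i_1} ⋯ A_{i_n}` for a word `w = x_{i_1} ⋯ x_{i_n}`. -/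
noncomputable def wordA (g D : ℕ) (w : List (Fin g)) : Matrix (Word g D) (Word g D) ℂ :=
  (w.map (creA g D)).prod

/-- The vacuum vector `Ω = e_∅` of the truncated Fock space. -/
noncomputable def vacuum (g D : ℕ) : Word g D → ℂ := fun v => if v.1 = [] then 1 else 0

lemma wordA_aux (g D : ℕ) : ∀ (l : List (Fin g)), l.length ≤ D →
    ∀ v : Word g D, l.length ≤ v.1.length →
      (wordA g D l).mulVec (vacuum g D) v = if v.1 = l then 1 else 0 := by
  intro l
  induction l with
  | nil =>
    intro _ v _
    simp [wordA, Matrix.one_mulVec, vacuum]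
  | cons j t ih =>
    intro hl v hv
    have htD : t.length ≤ D := le_of_lt (lt_of_lt_of_le (Nat.lt_succ_self _) hl)
    have hv' : t.length < v.1.length := lt_of_lt_of_le (Nat.lt_succ_self _) hv
    have hft := ih htD
    have hwA : wordA g D (j :: t) = creA g D j * wordA g D t := by
      simp [wordA]
    rw [hwA, ← Matrix.mulVec_mulVec]
    set f := (wordA g D t).mulVec (vacuum g D) with hf
    simp only [Matrix.mulVec, dotProduct, creA, add_mul]
    rw [Finset.sum_add_distrib]
    have h2 : ∑ x : Word g D, (if x.1 = j :: v.1 then (1:ℂ) else 0) * f x = 0 := by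
      apply Finset.sum_eq_zero
      intro x _
      by_cases hx : x.1 = j :: v.1
      · have hlen : t.length ≤ x.1.length := by
          rw [hx]; simp; omega
        rw [hft x hlen]
        have hne : (j :: v.1) ≠ t := by
          intro h
          have := congrArg List.length h
          simp at this; omega
        simp [hx, hne]
      · simp [hx]
    rw [h2, add_zero]
    by_cases hveq : v.1 = j :: t
    · rw [if_pos hveq]
      rw [Finset.sum_eq_single (⟨t, htD⟩ : Word g D)]
      · rw [hft ⟨t, htD⟩ le_rfl]
        simp [hveq]
      · intro b _ hb
        by_cases hb' : v.1 = j :: b.1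
        · exfalso
          rw [hveq] at hb'
          have : b.1 = t := by injection hb'.symm
          exact hb (Subtype.ext this)
        · simp [hb']
      · simp
    · rw [if_neg hveq]
      apply Finset.sum_eq_zero
      intro x _
      by_cases hx : v.1 = j :: x.1
      · have hlen : t.length ≤ x.1.length := by
          have := congrArg List.length hx
          simp at this; omega
        rw [hft x hlen]
        have : x.1 ≠ t := by
          intro h; rw [h] at hx; exact hveq hx
        simp [hx, this]
      · simp [hx]

/-- For every word `w` with `|w| ≤ D`, one has
`A^w Ω = e_w + ∑_{|v| < |w|} c_{v,w} e_v` for some scalars `c_{v,w}`. -/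
theorem stmt_5 (g D : ℕ) (w : Word g D) :
    ∃ c : Word g D → ℂ,
      (wordA g D w.1).mulVec (vacuum g D) =
        (fun v => if v = w then 1 else 0) +
          ∑ v ∈ Finset.univ.filter (fun v : Word g D => v.1.length < w.1.length),
            c v • (fun u => if u = v then (1 : ℂ) else 0) := by
  set f := (wordA g D w.1).mulVec (vacuum g D) with hf
  refine ⟨f, ?_⟩
  funext u
  simp only [Pi.add_apply, Finset.sum_apply, Pi.smul_apply, smul_eq_mul, mul_ite, mul_one,
    mul_zero]
  rw [Finset.sum_ite_eq (Finset.univ.filter (fun v : Word g D => v.1.length < w.1.length)) u f]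
  by_cases h : u.1.length < w.1.length
  · have hu : u ≠ w := by
      intro he; rw [he] at h; omega
    simp [h, hu]
  · have hlen : w.1.length ≤ u.1.length := le_of_not_gt h
    rw [hf, wordA_aux g D w.1 w.2 u hlen]
    simp only [Finset.mem_filter, Finset.mem_univ, true_and, h, if_false, add_zero]
    congr 1
    simp [Subtype.ext_iff]
end

section
/- The coefficients of an operator-valued noncommutative polynomial q of degree at most D are uniquely determined by its evaluation q(A) at the compressed symmetrized creation tuple A; explicitly, the coefficient vector Q satisfies Q = M_D^{-1} Z(q), where Z_v(q) = (id ⊗ Ω_v)(q(A)) and Ω_v(T) = ⟨T Ω, e_v⟩. -/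
/-- The extraction matrix `M_D[v,w] = ⟨A^w Ω, e_v⟩`. -/
noncomputable def extM (g D : ℕ) : Matrix (Word g D) (Word g D) ℂ :=
  fun v w => (wordA g D w.1).mulVec (vacuum g D) v

/-- The `(a,b)` entry of `q(A) = ∑_w Q_w ⊗ A^w`, viewed as a block operator matrix on
`H ⊗ F_D ≅ ⊕_{|w| ≤ D} H`. -/
noncomputable def evalAMat (g D : ℕ) {H : Type*} [NormedAddCommGroup H]
    [InnerProductSpace ℂ H] (Q : Word g D → (H →L[ℂ] H)) (a b : Word g D) :
    H →L[ℂ] H :=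
  ∑ w : Word g D, ((wordA g D w.1) a b) • Q w

lemma wordA_mulVec (g D : ℕ) (l : List (Fin g)) (hl : l.length ≤ D) :
    ∀ v : Word g D, l.length ≤ v.1.length →
      (wordA g D l).mulVec (vacuum g D) v = if v.1 = l then 1 else 0 := by
  induction l with
  | nil =>
      intro v _
      simp [wordA, vacuum, Matrix.one_mulVec]
  | cons j l' ih =>
      intro v hv
      have hl' : l'.length ≤ D := le_trans (Nat.le_succ _) hl
      have hsplit : wordA g D (j :: l') = creA g D j * wordA g D l' := by
        simp [wordA]
      rw [hsplit, ← Matrix.mulVec_mulVec]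
      set f := (wordA g D l').mulVec (vacuum g D) with hf
      have key : (creA g D j).mulVec f v
          = creA g D j v ⟨l', hl'⟩ * f ⟨l', hl'⟩ := by
        rw [Matrix.mulVec, dotProduct]
        refine Finset.sum_eq_single_of_mem _ (Finset.mem_univ _) ?_
        intro u _ hu
        by_cases hlen : l'.length ≤ u.1.length
        · have : f u = if u.1 = l' then 1 else 0 := ih hl' u hlen
          have hne : u.1 ≠ l' := fun h => hu (Subtype.ext h)
          rw [this, if_neg hne, mul_zero]
        · push_neg at hlen
          have hv' : l'.length + 1 ≤ v.1.length := by
            simpa using hv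
          have h1 : v.1 ≠ j :: u.1 := by
            intro h
            have h' := congrArg List.length h
            simp only [List.length_cons] at h'
            omega
          have h2 : u.1 ≠ j :: v.1 := by
            intro h
            have h' := congrArg List.length h
            simp only [List.length_cons] at h'
            omega
          simp [creA, h1, h2]
      rw [key]
      have hfl : f ⟨l', hl'⟩ = 1 := by
        have := ih hl' ⟨l', hl'⟩ le_rfl
        simpa using this
      have hv' : l'.length + 1 ≤ v.1.length := by
        simpa using hv
      have h2 : l' ≠ j :: v.1 := by
        intro h
        have h' := congrArg List.length h
        simp only [List.length_cons] at h'
        omega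
      simp [hfl, creA, h2]

lemma extM_eq (g D : ℕ) (v w : Word g D) (h : w.1.length ≤ v.1.length) :
    extM g D v w = if v.1 = w.1 then 1 else 0 :=
  wordA_mulVec g D w.1 w.2 v h

lemma extM_blockTriangular (g D : ℕ) :
    (extM g D).BlockTriangular (fun v : Word g D => v.1.length) := by
  intro v w h
  dsimp only at h
  have hne : v.1 ≠ w.1 := by
    intro hvw
    have := congrArg List.length hvw
    omega
  rw [extM_eq g D v w (le_of_lt h), if_neg hne]

lemma extM_det (g D : ℕ) : (extM g D).det = 1 := by
  rw [(extM_blockTriangular g D).det]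
  refine Finset.prod_eq_one ?_
  intro a _
  have : (extM g D).toSquareBlock (fun v : Word g D => v.1.length) a = 1 := by
    ext v w
    rcases v with ⟨v, hv⟩
    rcases w with ⟨w, hw⟩
    have : extM g D v w = if v.1 = w.1 then 1 else 0 :=
      extM_eq g D v w (by rw [hv, hw])
    simp only [Matrix.toSquareBlock_def, Matrix.one_apply]
    by_cases h : v = w
    · subst h
      rw [Matrix.of_apply, this]
      simp
    · have hne : v.1 ≠ w.1 := fun hh => h (Subtype.ext hh)
      rw [Matrix.of_apply, this, if_neg hne,
        if_neg (fun hh => h (congrArg Subtype.val hh))]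
  rw [this, Matrix.det_one]


/-- The coefficients of an operator-valued polynomial `q` of degree at most `D` are
recovered from its evaluation `q(A)` by the extraction formula `Q = M_D⁻¹ Z(q)`, where
`Z_v(q) = (id ⊗ Ω_v)(q(A))` and `Ω_v(T) = ⟨TΩ, e_v⟩`; in particular they are uniquely
determined by `q(A)`. -/
theorem stmt_7 (g D : ℕ) (H : Type*) [NormedAddCommGroup H] [InnerProductSpace ℂ H]
    (Q : Word g D → (H →L[ℂ] H)) :
    ∀ v : Word g D,
      Q v = ∑ u : Word g D, ((extM g D)⁻¹ v u) •
        (∑ b : Word g D, (vacuum g D b) • evalAMat g D Q u b) := by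
  simp only [evalAMat]
  intro v
  have hinv : (extM g D)⁻¹ * extM g D = 1 :=
    Matrix.nonsing_inv_mul _ (by rw [extM_det]; exact isUnit_one)
  have hZ : ∀ u : Word g D,
      (∑ b : Word g D, (vacuum g D b) • (∑ w : Word g D, ((wordA g D w.1) u b) • Q w))
        = ∑ w : Word g D, extM g D u w • Q w := by
    intro u
    calc ∑ b : Word g D, (vacuum g D b) • (∑ w : Word g D, ((wordA g D w.1) u b) • Q w)
        = ∑ b : Word g D, ∑ w : Word g D, (vacuum g D b * (wordA g D w.1) u b) • Q w := by
          simp [Finset.smul_sum, smul_smul]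
      _ = ∑ w : Word g D, ∑ b : Word g D, (vacuum g D b * (wordA g D w.1) u b) • Q w :=
          Finset.sum_comm
      _ = ∑ w : Word g D, extM g D u w • Q w := by
          refine Finset.sum_congr rfl fun w _ => ?_
          rw [← Finset.sum_smul]
          congr 1
          rw [extM]
          rw [Matrix.mulVec, dotProduct]
          exact Finset.sum_congr rfl fun b _ => mul_comm _ _
  calc Q v = ∑ w : Word g D, ((1 : Matrix (Word g D) (Word g D) ℂ) v w) • Q w := by
        simp [Matrix.one_apply]
    _ = ∑ w : Word g D, (((extM g D)⁻¹ * extM g D) v w) • Q w := by rw [hinv]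
    _ = ∑ w : Word g D, (∑ u : Word g D, (extM g D)⁻¹ v u * extM g D u w) • Q w := by
        simp [Matrix.mul_apply]
    _ = ∑ w : Word g D, ∑ u : Word g D, ((extM g D)⁻¹ v u * extM g D u w) • Q w := by
        simp [Finset.sum_smul]
    _ = ∑ u : Word g D, ∑ w : Word g D, ((extM g D)⁻¹ v u * extM g D u w) • Q w :=
        Finset.sum_comm
    _ = ∑ u : Word g D, ((extM g D)⁻¹ v u) •
          (∑ b : Word g D, (vacuum g D b) • (∑ w : Word g D, ((wordA g D w.1) u b) • Q w)) := by
        refine Finset.sum_congr rfl fun u _ => ?_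
        rw [hZ u, Finset.smul_sum]
        exact Finset.sum_congr rfl fun w _ => (smul_smul _ _ _).symm
end
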